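/- arXiv:2502.03306 — 5 statements merged into one kernel-verified Lean document; each statement's English description precedes it below -/
import Mathlib

section
/- Two almost abelian Lie algebras g_A and g_{A'} (with A, A' nilpotent, nonzero) are isomorphic if and only if A' is conjugate to a nonzero scalar multiple of A. -/
/-- The almost abelian Lie algebra `g_A = ℝ e₀ ⋉_A ℝ^m`: underlying vector space
`ℝ × (Fin m → ℝ)`, with bracket `⁅(s,v), (t,w)⁆ = (0, s • A w - t • A v)`, i.e.
`⁅e₀, w⁆ = A w` on the abelian ideal `ℝ^m`. -/
def gA (m : ℕ) (_A : Matrix (Fin m) (Fin m) ℝ) : Type := ℝ × (Fin m → ℝ)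

namespace gA

variable {m : ℕ} {A : Matrix (Fin m) (Fin m) ℝ}

instance : AddCommGroup (gA m A) := inferInstanceAs (AddCommGroup (ℝ × (Fin m → ℝ)))
noncomputable instance : Module ℝ (gA m A) := inferInstanceAs (Module ℝ (ℝ × (Fin m → ℝ)))

instance : LieRing (gA m A) where
  bracket x y := ((0 : ℝ), x.1 • A.mulVec y.2 - y.1 • A.mulVec x.2)
  add_lie x y z := by
    show ((0 : ℝ), (x.1 + y.1) • A.mulVec z.2 - z.1 • A.mulVec (x.2 + y.2))
      = ((0 : ℝ) + 0, (x.1 • A.mulVec z.2 - z.1 • A.mulVec x.2)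
          + (y.1 • A.mulVec z.2 - z.1 • A.mulVec y.2))
    rw [Prod.mk.injEq]
    constructor
    · ring
    · rw [Matrix.mulVec_add]
      module
  lie_add x y z := by
    show ((0 : ℝ), x.1 • A.mulVec (y.2 + z.2) - (y.1 + z.1) • A.mulVec x.2)
      = ((0 : ℝ) + 0, (x.1 • A.mulVec y.2 - y.1 • A.mulVec x.2)
          + (x.1 • A.mulVec z.2 - z.1 • A.mulVec x.2))
    rw [Prod.mk.injEq]
    constructor
    · ring
    · rw [Matrix.mulVec_add]
      module
  lie_self x := by
    show ((0 : ℝ), x.1 • A.mulVec x.2 - x.1 • A.mulVec x.2) = (0, 0)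
    rw [Prod.mk.injEq]
    exact ⟨rfl, sub_self _⟩
  leibniz_lie x y z := by
    show ((0 : ℝ), x.1 • A.mulVec (y.1 • A.mulVec z.2 - z.1 • A.mulVec y.2)
            - (0 : ℝ) • A.mulVec x.2)
      = ((0 : ℝ), (0 : ℝ) • A.mulVec z.2 - z.1 • A.mulVec (x.1 • A.mulVec y.2 - y.1 • A.mulVec x.2))
        + ((0 : ℝ), y.1 • A.mulVec (x.1 • A.mulVec z.2 - z.1 • A.mulVec x.2)
            - (0 : ℝ) • A.mulVec y.2)
    rw [Prod.mk.injEq]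
    constructor
    · show (0 : ℝ) = 0 + 0; ring
    · show _ = (_ : Fin m → ℝ) + _
      rw [Matrix.mulVec_sub, Matrix.mulVec_sub, Matrix.mulVec_sub,
        Matrix.mulVec_smul, Matrix.mulVec_smul, Matrix.mulVec_smul,
        Matrix.mulVec_smul, Matrix.mulVec_smul, Matrix.mulVec_smul]
      module

noncomputable instance : LieAlgebra ℝ (gA m A) where
  lie_smul t x y := by
    show ((0 : ℝ), x.1 • A.mulVec (t • y.2) - (t * y.1) • A.mulVec x.2)
      = t • (((0 : ℝ), x.1 • A.mulVec y.2 - y.1 • A.mulVec x.2) : ℝ × (Fin m → ℝ))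
    rw [Prod.smul_mk, Prod.mk.injEq]
    constructor
    · simp
    · rw [Matrix.mulVec_smul]
      module

end gA

/-!
An isomorphism `f : g_A ≃ g_{A'}` need not map the ideal `ℝ^m` into itself, but since two proper
hyperplanes cannot cover a vector space, some `x` has both `x` and `f x` outside the ideal. For
`z` outside the ideal, `⁅z, y⁆ = z₁ • A (π_z y)`, where `π_z` projects onto `ℝ^m` along `z`.
Hence `Q := π_{f x} ∘ f` restricted to `ℝ^m` is injective, and applying `f` to
`⁅x, w⁆ = x₁ • A w` gives `x₁ • Q A = (f x)₁ • A' Q`. Conversely `(t, v) ↦ (c⁻¹ t, P v)` is an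
isomorphism `g_A ≃ g_{c P A P⁻¹}`.
-/

theorem exists_apply_ne_zero_and_apply_ne_zero {R V M N : Type*} [Semiring R]
    [AddCommMonoid V] [AddCommMonoid M] [AddCommMonoid N] [Module R V] [Module R M] [Module R N]
    {φ : V →ₗ[R] M} {χ : V →ₗ[R] N} (hφ : φ ≠ 0) (hχ : χ ≠ 0) :
    ∃ x, φ x ≠ 0 ∧ χ x ≠ 0 := by
  obtain ⟨x, hx⟩ := DFunLike.ne_iff.mp hφ
  obtain ⟨y, hy⟩ := DFunLike.ne_iff.mp hχ
  by_cases hχx : χ x = 0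
  · by_cases hφy : φ y = 0
    · exact ⟨x + y, by simpa [hφy] using hx, by simpa [hχx] using hy⟩
    · exact ⟨y, hφy, hy⟩
  · exact ⟨x, hx, hχx⟩

theorem Matrix.eq_smul_conj_iff {n K : Type*} [Fintype n] [DecidableEq n] [Field K]
    {A A' : Matrix n n K} {c : K} (hc : c ≠ 0) (P : (Matrix n n K)ˣ) :
    A' = c • ((P : Matrix n n K) * A * (↑P⁻¹ : Matrix n n K)) ↔ c⁻¹ • (A' * P) = P * A := by
  constructor
  · rintro rfl
    rw [smul_mul, smul_smul, inv_mul_cancel₀ hc, one_smul, mul_assoc, Units.inv_mul, mul_one]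
  · intro h
    rw [← h, smul_mul, smul_smul, mul_inv_cancel₀ hc, one_smul, mul_assoc, Units.mul_inv,
      mul_one]

open Matrix

namespace gA

variable {m : ℕ} {A A' : Matrix (Fin m) (Fin m) ℝ}

@[ext]
theorem ext {x y : gA m A} (h₁ : x.1 = y.1) (h₂ : x.2 = y.2) : x = y := Prod.ext h₁ h₂

@[simp] theorem fst_smul (r : ℝ) (x : gA m A) : (r • x).1 = r * x.1 := rfl
@[simp] theorem snd_smul (r : ℝ) (x : gA m A) : (r • x).2 = r • x.2 := rfl
@[simp] theorem snd_lie (x y : gA m A) : ⁅x, y⁆.2 = x.1 • A *ᵥ y.2 - y.1 • A *ᵥ x.2 := rfl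

def fstₗ : gA m A →ₗ[ℝ] ℝ := LinearMap.fst ℝ ℝ (Fin m → ℝ)

def inr : (Fin m → ℝ) →ₗ[ℝ] gA m A := LinearMap.inr ℝ ℝ (Fin m → ℝ)

def e₀ : gA m A := ((1 : ℝ), 0)

@[simp] theorem fst_e₀ : (e₀ : gA m A).1 = 1 := rfl
@[simp] theorem fst_inr (w : Fin m → ℝ) : (inr w : gA m A).1 = 0 := rfl
@[simp] theorem snd_inr (w : Fin m → ℝ) : (inr w : gA m A).2 = w := rfl

theorem fstₗ_ne_zero : (fstₗ : gA m A →ₗ[ℝ] ℝ) ≠ 0 :=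
  DFunLike.ne_iff.mpr ⟨e₀, one_ne_zero⟩

noncomputable def projAlong (z : gA m A) : gA m A →ₗ[ℝ] (Fin m → ℝ) :=
  LinearMap.snd ℝ ℝ (Fin m → ℝ) - (LinearMap.fst ℝ ℝ (Fin m → ℝ)).smulRight (z.1⁻¹ • z.2)

theorem projAlong_apply (z y : gA m A) : projAlong z y = y.2 - (y.1 / z.1) • z.2 := by
  change y.2 - y.1 • (z.1⁻¹ • z.2) = _
  rw [smul_smul, div_eq_mul_inv]

@[simp] theorem projAlong_inr (z : gA m A) (w : Fin m → ℝ) : projAlong z (inr w) = w := by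
  simp [projAlong_apply]

theorem projAlong_eq_zero_iff {z : gA m A} (hz : z.1 ≠ 0) (y : gA m A) :
    projAlong z y = 0 ↔ y = (y.1 / z.1) • z := by
  rw [projAlong_apply, sub_eq_zero, gA.ext_iff]
  simp [div_mul_cancel₀ _ hz]

theorem lie_eq_inr_projAlong {z : gA m A} (hz : z.1 ≠ 0) (y : gA m A) :
    ⁅z, y⁆ = inr (z.1 • A *ᵥ projAlong z y) := by
  ext1
  · rfl
  · simp only [snd_lie, snd_inr, projAlong_apply, mulVec_sub, mulVec_smul, smul_sub, smul_smul,
      mul_div_cancel₀ _ hz]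

noncomputable def lieHomOfSemiconj (k : ℝ) (P : Matrix (Fin m) (Fin m) ℝ)
    (h : k • (A' * P) = P * A) : gA m A →ₗ⁅ℝ⁆ gA m A' where
  toLinearMap := LinearMap.prodMap (k • LinearMap.id) (Matrix.toLin' P)
  map_lie' {x y} := by
    have hP : ∀ w, P *ᵥ (A *ᵥ w) = k • A' *ᵥ (P *ᵥ w) := fun w => by
      rw [mulVec_mulVec, ← h, smul_mulVec, mulVec_mulVec]
    ext1
    · exact mul_zero k
    · change P *ᵥ (x.1 • A *ᵥ y.2 - y.1 • A *ᵥ x.2)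
        = (k * x.1) • A' *ᵥ (P *ᵥ y.2) - (k * y.1) • A' *ᵥ (P *ᵥ x.2)
      rw [mulVec_sub, mulVec_smul, mulVec_smul, hP, hP, smul_smul, smul_smul, mul_comm k,
        mul_comm k]

theorem lieHomOfSemiconj_bijective {k : ℝ} (hk : k ≠ 0) (P : (Matrix (Fin m) (Fin m) ℝ)ˣ)
    (h : k • (A' * P) = P * A) :
    Function.Bijective (lieHomOfSemiconj k (P : Matrix (Fin m) (Fin m) ℝ) h) :=
  (LinearEquiv.smulOfNeZero ℝ ℝ k hk).bijective.prodMap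
    (Matrix.toLinearEquiv' (P : Matrix (Fin m) (Fin m) ℝ) P.invertible).bijective

noncomputable def intertwiner (f : gA m A ≃ₗ⁅ℝ⁆ gA m A') (x : gA m A) :
    (Fin m → ℝ) →ₗ[ℝ] (Fin m → ℝ) :=
  projAlong (f x) ∘ₗ (f : gA m A →ₗ[ℝ] gA m A') ∘ₗ inr

theorem intertwiner_apply (f : gA m A ≃ₗ⁅ℝ⁆ gA m A') (x : gA m A) (w : Fin m → ℝ) :
    intertwiner f x w = projAlong (f x) (f (inr w)) := rfl

theorem intertwiner_mulVec (f : gA m A ≃ₗ⁅ℝ⁆ gA m A') {x : gA m A} (hx : x.1 ≠ 0)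
    (hfx : (f x).1 ≠ 0) (w : Fin m → ℝ) :
    intertwiner f x (A *ᵥ w) = ((f x).1 / x.1) • A' *ᵥ intertwiner f x w := by
  have hlie : (inr (x.1 • A *ᵥ w) : gA m A) = ⁅x, inr w⁆ := by
    rw [lie_eq_inr_projAlong hx, projAlong_inr]
  have key : x.1 • intertwiner f x (A *ᵥ w) = (f x).1 • A' *ᵥ intertwiner f x w := by
    rw [← map_smul, intertwiner_apply, intertwiner_apply, hlie, LieEquiv.map_lie,
      lie_eq_inr_projAlong hfx, projAlong_inr]
  rw [div_eq_inv_mul, mul_smul, ← key, inv_smul_smul₀ hx]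

theorem intertwiner_injective (f : gA m A ≃ₗ⁅ℝ⁆ gA m A') {x : gA m A} (hx : x.1 ≠ 0)
    (hfx : (f x).1 ≠ 0) : Function.Injective (intertwiner f x) := by
  rw [← LinearMap.ker_eq_bot, LinearMap.ker_eq_bot']
  intro w hw
  set t := (f (inr w)).1 / (f x).1
  have hft : f (inr w) = f (t • x) := by
    rw [map_smul]
    exact (projAlong_eq_zero_iff hfx _).mp hw
  have hinr : (inr w : gA m A) = t • x := f.injective hft
  have ht : t * x.1 = 0 := by simpa using (congrArg Prod.fst hinr).symm
  rw [(mul_eq_zero.mp ht).resolve_right hx, zero_smul] at hinr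
  exact congrArg Prod.snd hinr

theorem exists_semiconj_of_lieEquiv (f : gA m A ≃ₗ⁅ℝ⁆ gA m A') :
    ∃ (k : ℝ) (P : (Matrix (Fin m) (Fin m) ℝ)ˣ), k ≠ 0 ∧ k • (A' * P) = P * A := by
  have hf : fstₗ ∘ₗ (f : gA m A →ₗ[ℝ] gA m A') ≠ 0 :=
    DFunLike.ne_iff.mpr ⟨f.symm e₀, by
      change (f (f.symm e₀)).1 ≠ 0
      rw [f.apply_symm_apply, fst_e₀]
      exact one_ne_zero⟩
  obtain ⟨x, hx, hfx⟩ := exists_apply_ne_zero_and_apply_ne_zero fstₗ_ne_zero hf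
  set Q := intertwiner f x
  obtain ⟨P, hP⟩ : IsUnit (LinearMap.toMatrix' Q) := by
    rw [← mulVec_injective_iff_isUnit, funext (LinearMap.toMatrix'_mulVec Q)]
    exact intertwiner_injective f hx hfx
  refine ⟨(f x).1 / x.1, P, div_ne_zero hfx hx, ext_of_mulVec_single fun i => ?_⟩
  rw [smul_mulVec, ← mulVec_mulVec, ← mulVec_mulVec, hP, LinearMap.toMatrix'_mulVec,
    LinearMap.toMatrix'_mulVec, intertwiner_mulVec f hx hfx]

end gA

theorem stmt2_general (m : ℕ) (A A' : Matrix (Fin m) (Fin m) ℝ) :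
    Nonempty (gA m A ≃ₗ⁅ℝ⁆ gA m A') ↔
      ∃ (c : ℝ) (P : (Matrix (Fin m) (Fin m) ℝ)ˣ),
        c ≠ 0 ∧ A' = c • ((P : Matrix (Fin m) (Fin m) ℝ) * A * (↑P⁻¹ : Matrix (Fin m) (Fin m) ℝ)) := by
  constructor
  · rintro ⟨f⟩
    obtain ⟨k, P, hk, h⟩ := gA.exists_semiconj_of_lieEquiv f
    refine ⟨k⁻¹, P, inv_ne_zero hk, ?_⟩
    rwa [Matrix.eq_smul_conj_iff (inv_ne_zero hk), inv_inv]
  · rintro ⟨c, P, hc, h⟩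
    rw [Matrix.eq_smul_conj_iff hc] at h
    exact ⟨.ofBijective _ (gA.lieHomOfSemiconj_bijective (inv_ne_zero hc) P h)⟩

/-- Two almost abelian Lie algebras `g_A` and `g_{A'}` (with `A, A'`
nilpotent, nonzero) are isomorphic if and only if `A'` is conjugate to a nonzero scalar
multiple of `A`. -/
theorem stmt2 (m : ℕ) (A A' : Matrix (Fin m) (Fin m) ℝ)
    (hA : IsNilpotent A) (hA' : IsNilpotent A') (hA0 : A ≠ 0) (hA'0 : A' ≠ 0) :
    Nonempty (gA m A ≃ₗ⁅ℝ⁆ gA m A') ↔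
      ∃ (c : ℝ) (P : (Matrix (Fin m) (Fin m) ℝ)ˣ),
        c ≠ 0 ∧ A' = c • ((P : Matrix (Fin m) (Fin m) ℝ) * A * (↑P⁻¹ : Matrix (Fin m) (Fin m) ℝ)) :=
  stmt2_general m A A'
end

section
/- Let g be a nilpotent almost abelian Lie algebra of dimension 2n+2 whose center has dimension at most 2n−1 (equivalently, g is not isomorphic to h_3 ⊕ R^{2n-1}). Then g has a unique abelian ideal of codimension one. -/
/-!
Two distinct abelian ideals of codimension one span the whole algebra, so every element of their
intersection commutes with both of them and hence with everything: the intersection, of codimension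
two, lies in the centre. A centre of dimension at most `dim g - 3` therefore leaves room for only
one such ideal.
-/

open Module

theorem Submodule.isCoatom_of_finrank_add_one_eq {K V : Type*} [DivisionRing K] [AddCommGroup V]
    [Module K V] [FiniteDimensional K V] {p : Submodule K V}
    (hp : finrank K p + 1 = finrank K V) : IsCoatom p := by
  refine ⟨fun h => ?_, fun q hpq => eq_top_of_finrank_eq ?_⟩
  · rw [h, finrank_top] at hp
    omega
  · have := Submodule.finrank_lt_finrank_of_lt hpq
    have := Submodule.finrank_le q
    omega

namespace LieIdeal

variable {R L : Type*} [CommRing R] [LieRing L] [LieAlgebra R L]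

theorem lie_eq_zero_of_isLieAbelian {I : LieIdeal R L} (hI : IsLieAbelian I) {x y : L}
    (hx : x ∈ I) (hy : y ∈ I) : ⁅x, y⁆ = 0 :=
  congrArg Subtype.val (hI.trivial ⟨x, hx⟩ ⟨y, hy⟩)

theorem inf_le_center_of_sup_eq_top {I J : LieIdeal R L} (hI : IsLieAbelian I)
    (hJ : IsLieAbelian J) (hIJ : I ⊔ J = ⊤) : I ⊓ J ≤ LieAlgebra.center R L := by
  intro z hz
  rw [LieModule.mem_maxTrivSubmodule]
  intro x
  obtain ⟨y, hy, w, hw, rfl⟩ := (LieSubmodule.mem_sup I J x).mp (hIJ ▸ LieSubmodule.mem_top x)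
  rw [add_lie, lie_eq_zero_of_isLieAbelian hI hy hz.1, lie_eq_zero_of_isLieAbelian hJ hw hz.2,
    add_zero]

end LieIdeal

theorem LieIdeal.eq_of_isLieAbelian_of_finrank_center_add_two_lt {K L : Type*} [Field K]
    [LieRing L] [LieAlgebra K L] [FiniteDimensional K L]
    (hcenter : finrank K (LieAlgebra.center K L) + 2 < finrank K L)
    {I J : LieIdeal K L} (hI : IsLieAbelian I) (hJ : IsLieAbelian J)
    (hIdim : finrank K I + 1 = finrank K L) (hJdim : finrank K J + 1 = finrank K L) :
    I = J := by
  by_contra hne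
  have hsup : I.toSubmodule ⊔ J.toSubmodule = ⊤ :=
    (Submodule.isCoatom_of_finrank_add_one_eq hIdim).sup_eq_top_of_ne
      (Submodule.isCoatom_of_finrank_add_one_eq hJdim)
      fun h => hne (LieSubmodule.toSubmodule_injective h)
  have hinf_le : finrank K ↥(I.toSubmodule ⊓ J.toSubmodule) ≤
      finrank K (LieAlgebra.center K L) := by
    refine Submodule.finrank_mono (LieIdeal.inf_le_center_of_sup_eq_top hI hJ ?_)
    rwa [← LieSubmodule.toSubmodule_inj, LieSubmodule.sup_toSubmodule,
      LieSubmodule.top_toSubmodule]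
  have hinf : finrank K L + finrank K ↥(I.toSubmodule ⊓ J.toSubmodule) =
      finrank K I + finrank K J := by
    rw [← finrank_top K L, ← hsup]
    exact Submodule.finrank_sup_add_finrank_inf_eq I.toSubmodule J.toSubmodule
  omega

theorem stmt3_general (n : ℕ) (hn : 1 ≤ n)
    {g : Type*} [LieRing g] [LieAlgebra ℝ g] [FiniteDimensional ℝ g]
    (hdim : Module.finrank ℝ g = 2 * n + 2)
    (a : LieIdeal ℝ g) (habel : IsLieAbelian a)
    (hadim : Module.finrank ℝ a = 2 * n + 1)
    (hcentre : Module.finrank ℝ (LieAlgebra.center ℝ g) ≤ 2 * n - 1) :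
    ∃! b : LieIdeal ℝ g, IsLieAbelian b ∧ Module.finrank ℝ b = 2 * n + 1 :=
  ⟨a, ⟨habel, hadim⟩, fun _ ⟨hbabel, hbdim⟩ =>
    (LieIdeal.eq_of_isLieAbelian_of_finrank_center_add_two_lt (by omega) habel hbabel
      (by omega) (by omega)).symm⟩

/-- Let `g` be a nilpotent almost abelian Lie algebra of dimension `2n+2`
whose centre has dimension at most `2n-1` (equivalently, `g ≇ h₃ ⊕ ℝ^{2n-1}`).
Then `g` has a unique abelian ideal of codimension one. -/
theorem stmt3 (n : ℕ) (hn : 1 ≤ n)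
    {g : Type*} [LieRing g] [LieAlgebra ℝ g] [FiniteDimensional ℝ g]
    [LieRing.IsNilpotent g] (hnab : ¬ IsLieAbelian g)
    (hdim : Module.finrank ℝ g = 2 * n + 2)
    (a : LieIdeal ℝ g) (habel : IsLieAbelian a)
    (hadim : Module.finrank ℝ a = 2 * n + 1)
    (hcentre : Module.finrank ℝ (LieAlgebra.center ℝ g) ≤ 2 * n - 1) :
    ∃! b : LieIdeal ℝ g, IsLieAbelian b ∧ Module.finrank ℝ b = 2 * n + 1 :=
  stmt3_general n hn hdim a habel hadim hcentre
end

section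
/- Let g be an almost abelian Lie algebra with abelian ideal a of codimension one, J an integrable complex structure on g (J² = −id with vanishing Nijenhuis tensor), and b = a ∩ J(a). If e_0 ∈ g \ a, then φ = ad_{e_0} restricted to a preserves b and the restriction φ|_b commutes with J|_b. -/
/-- Let `g` be an almost abelian Lie algebra with abelian ideal `a` of
codimension one, `J` an integrable complex structure on `g` (`J² = -id`, vanishing
Nijenhuis tensor), and `b = a ∩ J(a)`.  If `e₀ ∈ g \ a`, then `φ = ad_{e₀}|_a` preserves
`b` and `φ|_b` commutes with `J|_b`. -/
theorem stmt4 {g : Type*} [LieRing g] [LieAlgebra ℝ g] [FiniteDimensional ℝ g]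
    (a : LieIdeal ℝ g) (habel : IsLieAbelian a)
    (e₀ : g) (he₀ : e₀ ∉ a)
    (hspan : Submodule.span ℝ {e₀} ⊔ a.toSubmodule = ⊤)
    (J : g →ₗ[ℝ] g) (hJ2 : ∀ x, J (J x) = -x)
    (hint : ∀ x y : g, ⁅J x, J y⁆ - ⁅x, y⁆ - J ⁅J x, y⁆ - J ⁅x, J y⁆ = 0)
    (b : Submodule ℝ g) (hb : b = a.toSubmodule ⊓ a.toSubmodule.map J) :
    (∀ x ∈ b, ⁅e₀, x⁆ ∈ b) ∧ (∀ x ∈ b, ⁅e₀, J x⁆ = J ⁅e₀, x⁆) := by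
  -- a is abelian
  have hab : ∀ p q : g, p ∈ a → q ∈ a → ⁅p, q⁆ = 0 := by
    intro p q hp hq
    have h := trivial_lie_zero _ _ (⟨p, hp⟩ : a) (⟨q, hq⟩ : a)
    exact congrArg Subtype.val h
  -- membership in b
  have hbmem : ∀ x : g, x ∈ b ↔ (x ∈ a ∧ J x ∈ a) := by
    intro x
    rw [hb]
    constructor
    · rintro ⟨hx, y, hy, rfl⟩
      refine ⟨hx, ?_⟩
      rw [hJ2]
      exact a.neg_mem hy
    · rintro ⟨hx, hJx⟩
      refine ⟨hx, -(J x), a.neg_mem hJx, ?_⟩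
      simp [hJ2]
  -- decompose J e₀
  obtain ⟨y, hy, v, hv, hJe⟩ : ∃ y ∈ Submodule.span ℝ {e₀}, ∃ v ∈ a.toSubmodule, y + v = J e₀ := by
    rw [← Submodule.mem_sup, hspan]; trivial
  obtain ⟨s, rfl⟩ := Submodule.mem_span_singleton.mp hy
  -- J v has e₀-coefficient -(1+s²)
  have hJv : J v = -((1+s^2) • e₀) - s • v := by
    have h := hJ2 e₀
    have h2 : J (s • e₀ + v) = -e₀ := by rw [hJe, h]
    have h3 : s • J e₀ + J v = -e₀ := by
      rw [← h2]; simp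
    rw [← hJe] at h3
    have h5 := eq_sub_of_add_eq' h3
    rw [h5]; module
  have key : ∀ x : g, x ∈ b → J ⁅e₀, x⁆ = ⁅e₀, J x⁆ := by
    intro x hx
    obtain ⟨hxa, hJxa⟩ := (hbmem x).mp hx
    have hN := hint v x
    rw [hab v x hv hxa, hab v (J x) hv hJxa, hJv] at hN
    have hlie1 : ⁅-((1+s^2) • e₀) - s • v, J x⁆ = -((1+s^2) • ⁅e₀, J x⁆) - s • ⁅v, J x⁆ := by
      simp [sub_lie, neg_lie, smul_lie]
    have hlie2 : ⁅-((1+s^2) • e₀) - s • v, x⁆ = -((1+s^2) • ⁅e₀, x⁆) - s • ⁅v, x⁆ := by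
      simp [sub_lie, neg_lie, smul_lie]
    rw [hlie1, hlie2, hab v x hv hxa, hab v (J x) hv hJxa] at hN
    have hN' : -((1+s^2) • ⁅e₀, J x⁆) - J (-((1+s^2) • ⁅e₀, x⁆)) = 0 := by
      simpa using hN
    have hs : (1+s^2) ≠ 0 := by positivity
    have hJlin : J (-((1+s^2) • ⁅e₀, x⁆)) = -((1+s^2) • J ⁅e₀, x⁆) := by simp
    rw [hJlin] at hN'
    have hz : (1+s^2) • (J ⁅e₀, x⁆ - ⁅e₀, J x⁆) = 0 := by
      linear_combination (norm := module) hN'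
    rcases smul_eq_zero.mp hz with h | h
    · exact absurd h hs
    · exact sub_eq_zero.mp h
  constructor
  · intro x hx
    obtain ⟨hxa, hJxa⟩ := (hbmem x).mp hx
    refine (hbmem _).mpr ⟨lie_mem_right ℝ g a e₀ x hxa, ?_⟩
    rw [key x hx]
    exact lie_mem_right ℝ g a e₀ (J x) hJxa
  · intro x hx
    exact (key x hx).symm
end

section
/- A (non-abelian) nilpotent almost abelian Lie algebra never admits a complex parallelisable structure, i.e. there is no integrable complex structure J on g with J[x,y] = [Jx,y] for all x,y (making (g,J) a complex Lie algebra). -/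
/-!
Pick `x ∉ a`, so that `g = ℝ x ⊕ a`. Since `g` is not abelian, `⁅x, u⁆ ≠ 0` for some `u ∈ a`.
Writing `J x = c x + v` with `v ∈ a`, bi-invariance of `J` and commutativity of `a` give
`J ⁅x, u⁆ = ⁅J x, u⁆ = c ⁅x, u⁆`, so `J` has a real eigenvector, which `J² = -1` forbids.
-/

open Module

theorem Submodule.exists_forall_eq_smul_add_of_finrank_add_one {K V : Type*} [Field K]
    [AddCommGroup V] [Module K V] (S : Submodule K V) (h : finrank K S + 1 = finrank K V) :
    ∃ x : V, ∀ y : V, ∃ c : K, ∃ v ∈ S, y = c • x + v := by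
  have : Module.Finite K V := Module.finite_of_finrank_pos (by omega)
  have hS : S ≠ ⊤ := fun hS => by
    rw [hS, finrank_top] at h
    omega
  obtain ⟨x, -, hx⟩ := SetLike.exists_of_lt hS.lt_top
  have hsup : S ⊔ K ∙ x = ⊤ :=
    Submodule.eq_top_of_finrank_eq (by rw [finrank_sup_span_singleton hx, h])
  refine ⟨x, fun y => ?_⟩
  obtain ⟨v, hv, z, hz, rfl⟩ := Submodule.mem_sup.mp (hsup ▸ Submodule.mem_top : y ∈ S ⊔ K ∙ x)
  obtain ⟨c, rfl⟩ := Submodule.mem_span_singleton.mp hz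
  exact ⟨c, v, hv, add_comm _ _⟩

theorem LinearMap.eq_zero_of_apply_eq_smul_of_sq_eq_neg {K V : Type*} [Field K] [LinearOrder K]
    [IsStrictOrderedRing K] [AddCommGroup V] [Module K V] {J : V →ₗ[K] V}
    (hJ : ∀ x, J (J x) = -x) {w : V} {c : K} (hw : J w = c • w) : w = 0 := by
  have hsq : (c * c + 1) • w = 0 := by
    rw [add_smul, one_smul, ← smul_smul, ← hw, ← map_smul, ← hw, hJ, neg_add_cancel]
  exact (smul_eq_zero.mp hsq).resolve_left (add_pos_of_nonneg_of_pos (mul_self_nonneg c) one_pos).ne'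

namespace LieIdeal

variable {R L : Type*} [CommRing R] [LieRing L] [LieAlgebra R L] {a : LieIdeal R L}

theorem lie_mem_eq_zero_of_isLieAbelian (habel : IsLieAbelian a) {v w : L}
    (hv : v ∈ a) (hw : w ∈ a) : ⁅v, w⁆ = 0 :=
  congrArg Subtype.val (habel.trivial ⟨v, hv⟩ ⟨w, hw⟩)

theorem isLieAbelian_of_forall_lie_eq_zero (habel : IsLieAbelian a) {x : L}
    (hx : ∀ y : L, ∃ c : R, ∃ v ∈ a, y = c • x + v) (hxa : ∀ u ∈ a, ⁅x, u⁆ = 0) :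
    IsLieAbelian L := by
  refine ⟨fun y z => ?_⟩
  obtain ⟨c, v, hv, rfl⟩ := hx y
  obtain ⟨d, w, hw, rfl⟩ := hx z
  have hvx : ⁅v, x⁆ = 0 := by rw [← lie_skew, hxa v hv, neg_zero]
  simp only [lie_add, add_lie, lie_smul, smul_lie, lie_self, hxa w hw, hvx,
    lie_mem_eq_zero_of_isLieAbelian habel hv hw, smul_zero, add_zero]

theorem apply_lie_eq_smul_lie_of_apply_lie_eq_lie_apply (habel : IsLieAbelian a)
    {J : L →ₗ[R] L} (hJ : ∀ x y : L, J ⁅x, y⁆ = ⁅J x, y⁆) {x v u : L} {c : R}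
    (hJx : J x = c • x + v) (hv : v ∈ a) (hu : u ∈ a) : J ⁅x, u⁆ = c • ⁅x, u⁆ := by
  rw [hJ, hJx, add_lie, smul_lie, lie_mem_eq_zero_of_isLieAbelian habel hv hu, add_zero]

end LieIdeal

theorem stmt8_general {g : Type*} [LieRing g] [LieAlgebra ℝ g] (hnab : ¬ IsLieAbelian g)
    (a : LieIdeal ℝ g) (habel : IsLieAbelian a)
    (hcodim : Module.finrank ℝ a + 1 = Module.finrank ℝ g) :
    ¬ ∃ J : g →ₗ[ℝ] g, (∀ x, J (J x) = -x) ∧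
        (∀ x y : g, ⁅J x, J y⁆ - ⁅x, y⁆ - J ⁅J x, y⁆ - J ⁅x, J y⁆ = 0) ∧
        (∀ x y : g, J ⁅x, y⁆ = ⁅J x, y⁆) := by
  rintro ⟨J, hJ2, -, hJ⟩
  obtain ⟨x, hx⟩ :=
    (a : Submodule ℝ g).exists_forall_eq_smul_add_of_finrank_add_one hcodim
  obtain ⟨u, hu, hxu⟩ : ∃ u ∈ a, ⁅x, u⁆ ≠ 0 := by
    by_contra! h
    exact hnab (LieIdeal.isLieAbelian_of_forall_lie_eq_zero habel hx h)
  obtain ⟨c, v, hv, hJx⟩ := hx (J x)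
  exact hxu (LinearMap.eq_zero_of_apply_eq_smul_of_sq_eq_neg hJ2
    (LieIdeal.apply_lie_eq_smul_lie_of_apply_lie_eq_lie_apply habel hJ hJx hv hu))

/-- A (non-abelian) nilpotent almost abelian Lie algebra never admits a
complex parallelisable structure, i.e. there is no integrable complex structure `J` on `g`
with `J⁅x,y⁆ = ⁅Jx, y⁆` for all `x, y` (making `(g, J)` a complex Lie algebra). -/
theorem stmt8 {g : Type*} [LieRing g] [LieAlgebra ℝ g] [FiniteDimensional ℝ g]
    [LieRing.IsNilpotent g] (hnab : ¬ IsLieAbelian g)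
    (a : LieIdeal ℝ g) (habel : IsLieAbelian a)
    (hcodim : Module.finrank ℝ a + 1 = Module.finrank ℝ g) :
    ¬ ∃ J : g →ₗ[ℝ] g, (∀ x, J (J x) = -x) ∧
        (∀ x y : g, ⁅J x, J y⁆ - ⁅x, y⁆ - J ⁅J x, y⁆ - J ⁅x, J y⁆ = 0) ∧
        (∀ x y : g, J ⁅x, y⁆ = ⁅J x, y⁆) :=
  stmt8_general hnab a habel hcodim
end

section
/- Let g be a 2n+2 dimensional nilpotent almost abelian Lie algebra with complex structure whose matrix A (as in the normal form) has ε = 1, i.e. the overlapping block has size j > 1. Then the first Betti number b_1 = dim H^1(g, R) is odd; explicitly b_1 = 2·δ + 1 where δ is the number of Jordan blocks of the matrix B. -/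
/-- The matrix `A = [[0,0],[v, B ⊕ B]] ∈ M_{2n+1}(ℝ)` with `v = (1,0,…,0)ᵀ` (placed in
the row of the first coordinate of the first copy of `B`), built from `B ∈ M_n(ℝ)`. -/
def matA (n : ℕ) (B : Matrix (Fin n) (Fin n) ℝ) :
    Matrix (Fin (2 * n + 1)) (Fin (2 * n + 1)) ℝ := fun i j =>
  let Bf : ℕ → ℕ → ℝ := fun a b =>
    if ha : a < n then if hb : b < n then B ⟨a, ha⟩ ⟨b, hb⟩ else 0 else 0
  if (i : ℕ) = 1 ∧ (j : ℕ) = 0 then 1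
  else if 1 ≤ (i : ℕ) ∧ (i : ℕ) ≤ n ∧ 1 ≤ (j : ℕ) ∧ (j : ℕ) ≤ n then
    Bf ((i : ℕ) - 1) ((j : ℕ) - 1)
  else if n + 1 ≤ (i : ℕ) ∧ n + 1 ≤ (j : ℕ) then
    Bf ((i : ℕ) - n - 1) ((j : ℕ) - n - 1)
  else 0

/-!
The bracket of `g_A` takes values in the abelian ideal `ℝ^m` and restricts to `A` there, so
`[g, g] ≅ im A` and `b₁ = (m + 1) - rank A`. For `B` in Jordan form, `B` and
`A = [[0,0],[v, B ⊕ B]]` have all their nonzero entries on the subdiagonal, so their columns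
are pairwise orthogonal: `AᵀA` is diagonal and the rank is the number of nonzero columns.
`A` has the nonzero column `v` and two copies of every nonzero column of `B`, whence
`rank A = 2 rank B + 1` and `b₁ = 2 (n - rank B) + 1 = 2 dim ker B + 1`.
-/

open Module Matrix

namespace Matrix

theorem rank_eq_card_col_ne_zero_of_pairwise_orthogonal {m n R : Type*} [Fintype m]
    [Fintype n] [DecidableEq n] [Field R] [LinearOrder R] [IsStrictOrderedRing R]
    (A : Matrix m n R) (h : Pairwise fun j j' => Aᵀ j ⬝ᵥ Aᵀ j' = 0) :
    A.rank = Nat.card {j // Aᵀ j ≠ 0} := by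
  classical
  have hdiag : Aᵀ * A = diagonal fun j => Aᵀ j ⬝ᵥ Aᵀ j := by
    ext j j'
    rcases eq_or_ne j j' with rfl | hjj'
    · simp [mul_apply, dotProduct]
    · simp [mul_apply, dotProduct, hjj', ← h hjj']
  rw [← rank_transpose_mul_self, hdiag, rank_diagonal, ← Nat.card_eq_fintype_card]
  exact Nat.card_congr (Equiv.subtypeEquivRight fun j => not_congr dotProduct_self_eq_zero)

def IsSubdiagonal {R : Type*} [Zero R] {k : ℕ} (M : Matrix (Fin k) (Fin k) R) : Prop :=
  ∀ i j, M i j ≠ 0 → (i : ℕ) = j + 1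

theorem IsSubdiagonal.pairwise_orthogonal {R : Type*} [NonUnitalNonAssocSemiring R] {k : ℕ}
    {M : Matrix (Fin k) (Fin k) R} (hM : M.IsSubdiagonal) :
    Pairwise fun j j' => Mᵀ j ⬝ᵥ Mᵀ j' = 0 := by
  intro j j' hjj'
  refine Finset.sum_eq_zero fun i _ => ?_
  by_contra hne
  have h := hM i j (left_ne_zero_of_mul hne)
  have h' := hM i j' (right_ne_zero_of_mul hne)
  exact hjj' (Fin.ext (by omega))

theorem IsSubdiagonal.rank_eq {R : Type*} [Field R] [LinearOrder R] [IsStrictOrderedRing R]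
    {k : ℕ} {M : Matrix (Fin k) (Fin k) R} (hM : M.IsSubdiagonal) :
    M.rank = Nat.card {j // ∃ i, M i j ≠ 0} := by
  rw [rank_eq_card_col_ne_zero_of_pairwise_orthogonal M hM.pairwise_orthogonal]
  exact Nat.card_congr (Equiv.subtypeEquivRight fun j => Function.ne_iff)

end Matrix

section matA

variable {n : ℕ} {B : Matrix (Fin n) (Fin n) ℝ}

theorem isSubdiagonal_matA (hB : B.IsSubdiagonal) : (matA n B).IsSubdiagonal := by
  intro i j h
  simp only [matA] at h
  split_ifs at h
  all_goals first | omega | (have := hB _ _ h; dsimp only at this; omega) | exact absurd rfl h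

/-- The splitting `ℝ^{2n+1} = ℝ ⊕ ℝ^n ⊕ ℝ^n` in which `matA n B` has the block form
`[[0,0],[v, B ⊕ B]]`. -/
def blockEquiv (n : ℕ) : Fin 1 ⊕ (Fin n ⊕ Fin n) ≃ Fin (2 * n + 1) :=
  ((Equiv.sumCongr (Equiv.refl _) finSumFinEquiv).trans finSumFinEquiv).trans (finCongr (by omega))

@[simp]
theorem blockEquiv_inl_val (i : Fin 1) : (blockEquiv n (.inl i) : ℕ) = 0 :=
  Fin.val_eq_zero i

@[simp]
theorem blockEquiv_inr_inl_val (a : Fin n) : (blockEquiv n (.inr (.inl a)) : ℕ) = a + 1 :=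
  Nat.add_comm 1 a

@[simp]
theorem blockEquiv_inr_inr_val (a : Fin n) :
    (blockEquiv n (.inr (.inr a)) : ℕ) = a + n + 1 := by
  change 1 + (n + (a : ℕ)) = a + n + 1
  omega

theorem matA_submatrix_blockEquiv :
    (matA n B).submatrix (blockEquiv n) (blockEquiv n) =
      fromBlocks 0 0
        (replicateCol (Fin 1) (Sum.elim (fun a : Fin n => if (a : ℕ) = 0 then 1 else 0) 0))
        (fromBlocks B 0 0 B) := by
  ext (i | i | i) (j | j | j) <;>
    simp only [submatrix_apply, matA, blockEquiv_inl_val, blockEquiv_inr_inl_val,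
      blockEquiv_inr_inr_val, fromBlocks_apply₁₁, fromBlocks_apply₁₂, fromBlocks_apply₂₁,
      fromBlocks_apply₂₂, replicateCol_apply, Sum.elim_inl, Sum.elim_inr, Matrix.zero_apply,
      Pi.zero_apply] <;>
    split_ifs <;>
    first
      | rfl
      | omega
      | exact congrArg₂ B (Fin.ext (by dsimp only; omega)) (Fin.ext (by dsimp only; omega))
      | simp_all

theorem card_col_ne_zero_matA (hn : 0 < n) :
    Nat.card {j // ∃ i, matA n B i j ≠ 0} = 2 * Nat.card {b // ∃ a, B a b ≠ 0} + 1 := by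
  have hcol : ∀ y, (∃ x, (matA n B).submatrix (blockEquiv n) (blockEquiv n) x y ≠ 0) ↔
      ∃ i, matA n B i (blockEquiv n y) ≠ 0 := fun y =>
    ((blockEquiv n).symm.exists_congr_left.trans (by simp)).symm
  rw [matA_submatrix_blockEquiv] at hcol
  rw [← Nat.card_congr ((blockEquiv n).subtypeEquiv hcol), Nat.card_congr Equiv.subtypeSum,
    Nat.card_sum, Nat.card_congr Equiv.subtypeSum, Nat.card_sum]
  have hv : ∃ a : Fin n, (a : ℕ) = 0 := ⟨⟨0, hn⟩, rfl⟩
  simp [Sum.exists, hv, two_mul, add_comm]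

theorem rank_matA (hn : 0 < n) (hB : B.IsSubdiagonal) : (matA n B).rank = 2 * B.rank + 1 := by
  rw [(isSubdiagonal_matA hB).rank_eq, hB.rank_eq, card_col_ne_zero_matA hn]

end matA

namespace gA

variable {m : ℕ} {A : Matrix (Fin m) (Fin m) ℝ}

theorem lie_def (x y : gA m A) : ⁅x, y⁆ = ((0 : ℝ), x.1 • A *ᵥ y.2 - y.1 • A *ᵥ x.2) := rfl

theorem finrank_eq : finrank ℝ (gA m A) = m + 1 := by
  show finrank ℝ (ℝ × (Fin m → ℝ)) = m + 1
  simp [add_comm]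

noncomputable def inclIdeal (m : ℕ) (A : Matrix (Fin m) (Fin m) ℝ) :
    (Fin m → ℝ) →ₗ[ℝ] gA m A :=
  LinearMap.inr ℝ ℝ (Fin m → ℝ)

theorem derivedAlgebra_eq_map_range :
    LieSubmodule.toSubmodule ⁅(⊤ : LieIdeal ℝ (gA m A)), (⊤ : LieIdeal ℝ (gA m A))⁆ =
      (LinearMap.range A.mulVecLin).map (inclIdeal m A) := by
  rw [LieSubmodule.lieIdeal_oper_eq_linear_span']
  apply le_antisymm
  · rw [Submodule.span_le]
    rintro _ ⟨x, -, y, -, rfl⟩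
    refine ⟨A *ᵥ (x.1 • y.2 - y.1 • x.2), ⟨x.1 • y.2 - y.1 • x.2, rfl⟩, ?_⟩
    rw [lie_def, mulVec_sub, mulVec_smul, mulVec_smul]
    rfl
  · rintro _ ⟨_, ⟨u, rfl⟩, rfl⟩
    refine Submodule.subset_span
      ⟨((1 : ℝ), 0), trivial, ((0 : ℝ), u), trivial, (lie_def _ _).trans ?_⟩
    rw [one_smul, zero_smul, sub_zero]
    rfl

theorem finrank_derivedAlgebra :
    finrank ℝ ↥⁅(⊤ : LieIdeal ℝ (gA m A)), (⊤ : LieIdeal ℝ (gA m A))⁆ = A.rank :=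
  ((LinearEquiv.ofEq _ _ derivedAlgebra_eq_map_range).trans
    (Submodule.equivMapOfInjective _ LinearMap.inr_injective _).symm).finrank_eq

end gA

theorem stmt19_general (n : ℕ) (hn : 0 < n) (B : Matrix (Fin n) (Fin n) ℝ)
    (hBJordan : ∀ i j, B i j ≠ 0 → ((i : ℕ) = (j : ℕ) + 1 ∧ B i j = 1)) :
    Module.finrank ℝ (gA (2 * n + 1) (matA n B)) -
        Module.finrank ℝ
          (↥⁅(⊤ : LieIdeal ℝ (gA (2 * n + 1) (matA n B))),
             (⊤ : LieIdeal ℝ (gA (2 * n + 1) (matA n B)))⁆) =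
      2 * Module.finrank ℝ (LinearMap.ker B.mulVecLin) + 1 ∧
    Odd (Module.finrank ℝ (gA (2 * n + 1) (matA n B)) -
        Module.finrank ℝ
          (↥⁅(⊤ : LieIdeal ℝ (gA (2 * n + 1) (matA n B))),
             (⊤ : LieIdeal ℝ (gA (2 * n + 1) (matA n B)))⁆)) := by
  have hrank : (matA n B).rank = 2 * B.rank + 1 :=
    rank_matA hn fun i j h => (hBJordan i j h).1
  have hnullity : B.rank + finrank ℝ (LinearMap.ker B.mulVecLin) = n := by
    rw [Matrix.rank, LinearMap.finrank_range_add_finrank_ker, finrank_fin_fun]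
  have hb₁ : finrank ℝ (gA (2 * n + 1) (matA n B)) -
      finrank ℝ ↥⁅(⊤ : LieIdeal ℝ (gA (2 * n + 1) (matA n B))),
        (⊤ : LieIdeal ℝ (gA (2 * n + 1) (matA n B)))⁆ =
        2 * finrank ℝ (LinearMap.ker B.mulVecLin) + 1 := by
    rw [gA.finrank_eq, gA.finrank_derivedAlgebra, hrank]
    omega
  exact ⟨hb₁, hb₁ ▸ odd_two_mul_add_one _⟩

/-- Let `g` be the `2n+2`-dimensional nilpotent almost abelian Lie algebra
with complex structure whose matrix `A` (in the normal form) has `ε = 1`, i.e.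
`g = ℝ e₀ ⋉_A ℝ^{2n+1}` with `A = [[0,0],[v, B ⊕ B]]`, `v = (1,0,…,0)ᵀ` and `B ∈ M_n(ℝ)`
nilpotent in Jordan normal form.  Then the first Betti number
`b₁ = dim H¹(g,ℝ) = dim g - dim [g,g]` is odd; explicitly `b₁ = 2δ + 1`, where
`δ = dim ker B` is the number of Jordan blocks of `B`. -/
theorem stmt19 (n : ℕ) (hn : 0 < n) (B : Matrix (Fin n) (Fin n) ℝ)
    (hBnil : IsNilpotent B)
    (hBJordan : ∀ i j, B i j ≠ 0 → ((i : ℕ) = (j : ℕ) + 1 ∧ B i j = 1)) :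
    Module.finrank ℝ (gA (2 * n + 1) (matA n B)) -
        Module.finrank ℝ
          (↥⁅(⊤ : LieIdeal ℝ (gA (2 * n + 1) (matA n B))),
             (⊤ : LieIdeal ℝ (gA (2 * n + 1) (matA n B)))⁆) =
      2 * Module.finrank ℝ (LinearMap.ker B.mulVecLin) + 1 ∧
    Odd (Module.finrank ℝ (gA (2 * n + 1) (matA n B)) -
        Module.finrank ℝ
          (↥⁅(⊤ : LieIdeal ℝ (gA (2 * n + 1) (matA n B))),
             (⊤ : LieIdeal ℝ (gA (2 * n + 1) (matA n B)))⁆)) :=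
  stmt19_general n hn B hBJordan
end
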